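/- arXiv:2501.12506 — 2 statements merged into one kernel-verified Lean document; each statement's English description precedes it below -/
import Mathlib

section
/- Let d ≥ 5, n ≥ 4d − 6, and g ≥ 1 be integers, and let p, γ, E be real numbers satisfying p > 36·(4d-7)·d·(d-2)/(d-1), (d-2)/(2d-2) ≤ γ ≤ ((d-2)/(2d-2))·(1 + d/p), and E ≥ 27·(4d-7)·g. Then (d+1)·E + 2 − 2g + (n-1)·(E + 2 + (E + 2·(2g-1)/(d-2))·γ)/2 − (E − g + 1)·(n+1) < 0. -/
/-!
Write `γ₀ = (d-2)/(2d-2)`. The exponent equals `(d-1)E - (n-1)c` with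
`c = E(1-γ)/2 - g - (2g-1)γ/(d-2)`, and `c ≥ 0`, so the worst case is `n = 4d-6`. There the
coefficient of `E` is `-((2d-5) - (4d-7)γ)/2`, and `(2d-5) - (4d-7)γ₀ = (d-4)/(2d-2) ≥ 1/8`.
The hypothesis on `p` makes `(4d-7)(γ - γ₀) < 1/72`, so the coefficient stays below `-1/18`,
and `E ≥ 27(4d-7)g` lets `E/18` absorb the remaining `(3/2)(4d-7)g`.
-/

lemma ratio_mul_div_lt {d p : ℝ} (hd : 2 < d)
    (hp : p > 36 * (4 * d - 7) * d * (d - 2) / (d - 1)) :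
    (d - 2) / (2 * d - 2) * (d / p) < 1 / (72 * (4 * d - 7)) := by
  have hp' : 36 * (4 * d - 7) * d * (d - 2) < p * (d - 1) := by
    rwa [gt_iff_lt, div_lt_iff₀ (by linarith)] at hp
  have hp0 : 0 < p := by
    by_contra! h
    nlinarith [mul_pos (mul_pos (by linarith : (0 : ℝ) < 4 * d - 7) (by linarith : 0 < d))
      (by linarith : 0 < d - 2)]
  rw [div_mul_div_comm, div_lt_div_iff₀ (mul_pos (by linarith) hp0) (by linarith)]
  nlinarith

lemma sub_seven_mul_ratio_le {d : ℝ} (hd : 5 ≤ d) :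
    (4 * d - 7) * ((d - 2) / (2 * d - 2)) ≤ 2 * d - 5 - 1 / 8 := by
  rw [mul_div_assoc', div_le_iff₀ (by linarith)]
  nlinarith

lemma sub_seven_mul_gamma_lt {d p γ : ℝ} (hd : 5 ≤ d)
    (hp : p > 36 * (4 * d - 7) * d * (d - 2) / (d - 1))
    (hγ : γ ≤ (d - 2) / (2 * d - 2) * (1 + d / p)) :
    (4 * d - 7) * γ < 2 * d - 5 - 1 / 9 := by
  have h47 : 0 < 4 * d - 7 := by linarith
  have hexcess : (4 * d - 7) * ((d - 2) / (2 * d - 2) * (d / p)) < 1 / 72 := by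
    calc (4 * d - 7) * ((d - 2) / (2 * d - 2) * (d / p))
        < (4 * d - 7) * (1 / (72 * (4 * d - 7))) :=
          mul_lt_mul_of_pos_left (ratio_mul_div_lt (by linarith) hp) h47
      _ = 1 / 72 := by field_simp
  have hγ' : (4 * d - 7) * γ ≤ (4 * d - 7) * ((d - 2) / (2 * d - 2))
      + (4 * d - 7) * ((d - 2) / (2 * d - 2) * (d / p)) :=
    calc (4 * d - 7) * γ ≤ (4 * d - 7) * ((d - 2) / (2 * d - 2) * (1 + d / p)) :=
          mul_le_mul_of_nonneg_left hγ h47.le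
      _ = _ := by ring
  linarith [sub_seven_mul_ratio_le hd]

lemma minorArc_exponent_eq (d n g γ E : ℝ) :
    (d + 1) * E + 2 - 2 * g + (n - 1) * (E + 2 + (E + 2 * (2 * g - 1) / (d - 2)) * γ) / 2
        - (E - g + 1) * (n + 1)
      = (d - 1) * E - (n - 1) * (E * (1 - γ) / 2 - g - (2 * g - 1) * γ / (d - 2)) := by
  ring

lemma minorArc_exponent_neg {d n g γ E : ℝ} (hd : 5 ≤ d) (hn : 4 * d - 6 ≤ n) (hg : 1 ≤ g)
    (hγ : (4 * d - 7) * γ < 2 * d - 5 - 1 / 9) (hE : E ≥ 27 * (4 * d - 7) * g) :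
    (d + 1) * E + 2 - 2 * g + (n - 1) * (E + 2 + (E + 2 * (2 * g - 1) / (d - 2)) * γ) / 2
        - (E - g + 1) * (n + 1) < 0 := by
  rw [minorArc_exponent_eq]
  have h47 : 0 < 4 * d - 7 := by linarith
  have hE0 : 0 < E := by nlinarith
  have hγ_half : γ < 1 / 2 := by nlinarith
  have hgenus : (2 * g - 1) * γ / (d - 2) ≤ g / 2 := by
    rw [div_le_iff₀ (by linarith)]
    nlinarith
  set c := E * (1 - γ) / 2 - g - (2 * g - 1) * γ / (d - 2)
  have hc : 0 ≤ c := by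
    have hEγ : E * γ ≤ E * (1 / 2) := mul_le_mul_of_nonneg_left hγ_half.le hE0.le
    simp only [c]
    nlinarith
  have hmargin : E * (1 / 18) < E * ((2 * d - 5 - (4 * d - 7) * γ) / 2) :=
    mul_lt_mul_of_pos_left (by linarith) hE0
  have hgenus' : (4 * d - 7) * ((2 * g - 1) * γ / (d - 2)) ≤ (4 * d - 7) * (g / 2) :=
    mul_le_mul_of_nonneg_left hgenus h47.le
  have hworst : (d - 1) * E < (4 * d - 7) * c := by
    simp only [c]
    linarith
  have hmono : (4 * d - 7) * c ≤ (n - 1) * c := mul_le_mul_of_nonneg_right (by linarith) hc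
  linarith

theorem stmt5_general (d n g : ℤ) (hd : 5 ≤ d) (hn : 4 * d - 6 ≤ n) (hg : 1 ≤ g)
    (p γ E : ℝ)
    (hp : p > 36 * (4 * (d : ℝ) - 7) * d * (d - 2) / (d - 1))
    (hγu : γ ≤ (((d : ℝ) - 2) / (2 * d - 2)) * (1 + d / p))
    (hE : E ≥ 27 * (4 * (d : ℝ) - 7) * g) :
    ((d : ℝ) + 1) * E + 2 - 2 * g
        + ((n : ℝ) - 1) * (E + 2 + (E + 2 * (2 * (g : ℝ) - 1) / (d - 2)) * γ) / 2
        - (E - g + 1) * (n + 1) < 0 := by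
  have hd' : (5 : ℝ) ≤ d := by exact_mod_cast hd
  have hn' : 4 * (d : ℝ) - 6 ≤ n := by exact_mod_cast hn
  have hg' : (1 : ℝ) ≤ g := by exact_mod_cast hg
  exact minorArc_exponent_neg hd' hn' hg' (sub_seven_mul_gamma_lt hd' hp hγu) hE

/-- Let `d ≥ 5`, `n ≥ 4d − 6`, and `g ≥ 1` be integers, and let
`p, γ, E` be real numbers satisfying `p > 36·(4d-7)·d·(d-2)/(d-1)`,
`(d-2)/(2d-2) ≤ γ ≤ ((d-2)/(2d-2))·(1 + d/p)`, and `E ≥ 27·(4d-7)·g`. Then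
`(d+1)·E + 2 − 2g + (n-1)·(E + 2 + (E + 2·(2g-1)/(d-2))·γ)/2 − (E − g + 1)·(n+1) < 0`. -/
theorem stmt5 (d n g : ℤ) (hd : 5 ≤ d) (hn : 4 * d - 6 ≤ n) (hg : 1 ≤ g)
    (p γ E : ℝ)
    (hp : p > 36 * (4 * (d : ℝ) - 7) * d * (d - 2) / (d - 1))
    (hγl : ((d : ℝ) - 2) / (2 * d - 2) ≤ γ)
    (hγu : γ ≤ (((d : ℝ) - 2) / (2 * d - 2)) * (1 + d / p))
    (hE : E ≥ 27 * (4 * (d : ℝ) - 7) * g) :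
    ((d : ℝ) + 1) * E + 2 - 2 * g
        + ((n : ℝ) - 1) * (E + 2 + (E + 2 * (2 * (g : ℝ) - 1) / (d - 2)) * γ) / 2
        - (E - g + 1) * (n + 1) < 0 :=
  stmt5_general d n g hd hn hg p γ E hp hγu hE
end

section
/- Let d ≥ 5 be an integer and set A = 27·(4d − 7). Let m be an integer with m > A, let p be an odd prime satisfying (1/A − 1/m)·p² > p + (p-1)/2, and let g ≥ 0, e ≥ 1, b ≥ 1 be integers satisfying e·p^{b+1} ≥ A·(p·g + ((p-1)/2)·(2g − 1)) + A·(p-1)/2. Then there exists a positive integer m_x such that: m_x ≥ 2g, p does not divide m_x, A·(p·g + ((p-1)/2)·(m_x − 1)) ≤ e·p^{b+1}, and e·p^{b+1} < m·(p·g + ((p-1)/2)·(m_x − 1) − 1). -/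
/-!
Write `q = (p - 1)/2` and `f(x) = p·g + q·(x - 1)`, so that `A·f` is an arithmetic progression
with step `A·q`. Take the last term `x = T` of the progression with `A·f(T) ≤ e·p^{b+1}`; the
hypothesis on `e·p^{b+1}` gives `T > 2g`, and one of `T - 1`, `T` is prime to `p`. This `m_x`
satisfies `e·p^{b+1} < A·f(m_x) + 2Aq`, and the condition on `p` (together with
`e·p^{b+1} ≥ p²`) is exactly what turns this into `e·p^{b+1} < m·(f(m_x) - 1)`.
-/

theorem not_dvd_or_not_dvd_sub_one {R : Type*} [CommRing R] {p : R} (hp : ¬IsUnit p) (x : R) :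
    ¬p ∣ x ∨ ¬p ∣ x - 1 := by
  by_contra! h
  exact hp (isUnit_of_dvd_one (by simpa using dvd_sub h.1 h.2))

theorem exists_not_dvd_le_lt_add_two_mul {p s c N x₀ : ℤ} (hp : ¬IsUnit p) (hs : 0 < s)
    (h₀ : c + s * (x₀ + 1) ≤ N) :
    ∃ x, x₀ ≤ x ∧ ¬p ∣ x ∧ c + s * x ≤ N ∧ N < c + s * (x + 2) := by
  obtain ⟨T, hT, hT'⟩ := (existsUnique_zsmul_near_of_pos hs (N - c)).exists
  simp only [smul_eq_mul] at hT hT'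
  have hx₀T : x₀ + 1 ≤ T := by
    by_contra! h
    nlinarith
  rcases not_dvd_or_not_dvd_sub_one hp T with hTp | hTp
  · exact ⟨T, by omega, hTp, by linarith, by nlinarith⟩
  · exact ⟨T - 1, by omega, hTp, by nlinarith, by nlinarith⟩

theorem lt_mul_sub_one_of_lt_add {K : Type*} [Field K] [LinearOrder K] [IsStrictOrderedRing K]
    {A M N p q f : K} (hA : 0 < A) (hAM : A < M) (hqp : q + 1 ≤ p) (hN : p ^ 2 ≤ N)
    (hkey : (1 / A - 1 / M) * p ^ 2 > p + q) (hf : N < A * f + 2 * A * q) :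
    N < M * (f - 1) := by
  have hM : 0 < M := hA.trans hAM
  have hkey' : A * M * (p + q) < (M - A) * p ^ 2 := by
    have := mul_lt_mul_of_pos_left hkey (mul_pos hA hM)
    rwa [show A * M * ((1 / A - 1 / M) * p ^ 2) = (M - A) * p ^ 2 by field_simp] at this
  have hNM : (M - A) * p ^ 2 ≤ (M - A) * N := mul_le_mul_of_nonneg_left hN (by linarith)
  have hfM : M * N < M * (A * f + 2 * A * q) := mul_lt_mul_of_pos_left hf hM
  have hAMq : A * M * (2 * q + 1) ≤ A * M * (p + q) :=
    mul_le_mul_of_nonneg_left (by linarith) (mul_pos hA hM).le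
  refine lt_of_mul_lt_mul_left (a := A) ?_ hA.le
  linarith

/-- Let `d ≥ 5` be an integer and set `A = 27·(4d − 7)`. Let `m` be an
integer with `m > A`, let `p` be an odd prime satisfying
`(1/A − 1/m)·p² > p + (p-1)/2`, and let `g ≥ 0`, `e ≥ 1`, `b ≥ 1` be integers
satisfying `e·p^{b+1} ≥ A·(p·g + ((p-1)/2)·(2g − 1)) + A·(p-1)/2`. Then there exists
a positive integer `m_x` such that: `m_x ≥ 2g`, `p ∤ m_x`,
`A·(p·g + ((p-1)/2)·(m_x − 1)) ≤ e·p^{b+1}`, and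
`e·p^{b+1} < m·(p·g + ((p-1)/2)·(m_x − 1) − 1)`. -/
theorem stmt8 (d A m : ℤ) (hd : 5 ≤ d) (hA : A = 27 * (4 * d - 7)) (hm : A < m)
    (p : ℕ) (hp : p.Prime) (hodd : Odd p)
    (hkey : (1 / (A : ℝ) - 1 / (m : ℝ)) * (p : ℝ) ^ 2 > (p : ℝ) + ((p : ℝ) - 1) / 2)
    (g e : ℤ) (b : ℕ) (hg : 0 ≤ g) (he : 1 ≤ e) (hb : 1 ≤ b)
    (hX : e * (p : ℤ) ^ (b + 1) ≥
      A * ((p : ℤ) * g + (((p : ℤ) - 1) / 2) * (2 * g - 1)) + A * ((p : ℤ) - 1) / 2) :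
    ∃ m_x : ℤ, 0 < m_x ∧ 2 * g ≤ m_x ∧ ¬ ((p : ℤ) ∣ m_x) ∧
      A * ((p : ℤ) * g + (((p : ℤ) - 1) / 2) * (m_x - 1)) ≤ e * (p : ℤ) ^ (b + 1) ∧
      e * (p : ℤ) ^ (b + 1) < m * ((p : ℤ) * g + (((p : ℤ) - 1) / 2) * (m_x - 1) - 1) := by
  set q : ℤ := ((p : ℤ) - 1) / 2
  set N : ℤ := e * (p : ℤ) ^ (b + 1)
  have hp_even : Even ((p : ℤ) - 1) := (hodd.natCast (R := ℤ)).sub_odd odd_one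
  have hpq : (p : ℤ) = 2 * q + 1 := by linarith [Int.two_mul_ediv_two_of_even hp_even]
  have hq : 1 ≤ q := by have := hp.two_le; omega
  have hA0 : 0 < A := by omega
  have hN : (p : ℤ) ^ 2 ≤ N :=
    calc (p : ℤ) ^ 2 ≤ (p : ℤ) ^ (b + 1) := pow_le_pow_right₀ (by omega) (by omega)
      _ ≤ N := le_mul_of_one_le_left (by positivity) he
  rw [Int.mul_ediv_assoc A (even_iff_two_dvd.mp hp_even)] at hX
  obtain ⟨x, hgx, hpx, hlow, hup⟩ := exists_not_dvd_le_lt_add_two_mul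
    (Nat.prime_iff_prime_int.mp hp).not_isUnit (mul_pos hA0 (by omega : 0 < q))
    (c := A * (p * g - q)) (x₀ := 2 * g) (N := N) (by linarith)
  have hx : x ≠ 0 := by rintro rfl; exact hpx (dvd_zero _)
  refine ⟨x, by omega, hgx, hpx, by linarith, ?_⟩
  have hf : N < A * (p * g + q * (x - 1)) + 2 * A * q := by linarith
  have hqR : ((p : ℝ) - 1) / 2 = q := by
    rw [show (p : ℝ) = 2 * q + 1 by exact_mod_cast hpq]; ring
  rw [hqR] at hkey
  have hqp : (q : ℝ) + 1 ≤ p := by exact_mod_cast (by omega : q + 1 ≤ (p : ℤ))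
  exact_mod_cast lt_mul_sub_one_of_lt_add (N := (N : ℝ))
    (f := ((p * g + q * (x - 1) : ℤ) : ℝ)) (by exact_mod_cast hA0) (by exact_mod_cast hm)
    hqp (by exact_mod_cast hN) hkey (by exact_mod_cast hf)
end
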